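/- Let n ≥ 1 and let f : ℝ^n × ℝ^n × ℝ^n → ℂ be smooth with D_s f = 0 and D_t f = 0 identically. Define the operators X_z g = (i/2) Σ_{j=1}^n (x_j − i y_j)( q_j g + ∂g/∂q_j ) and X_z† g = (i/2) Σ_{j=1}^n (x_j + i y_j)( q_j g − ∂g/∂q_j ). Then for every ℓ ∈ ℕ the iterates X_z^ℓ f and (X_z†)^ℓ f are harmonic: Σ_{j=1}^n ( ∂²/∂x_j² + ∂²/∂y_j² )( X_z^ℓ f ) = 0 and Σ_{j=1}^n ( ∂²/∂x_j² + ∂²/∂y_j² )( (X_z†)^ℓ f ) = 0. -/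

import Mathlib

open Complex Finset Matrix

noncomputable section

/-- A point of `ℝ^n × ℝ^n × ℝ^n`, with coordinates `(x, y, q)`. -/
abbrev Vec (n : ℕ) := (Fin n → ℝ) × (Fin n → ℝ) × (Fin n → ℝ)

/-- Partial derivative in the variable `x_j`. -/
noncomputable def pdx (n : ℕ) (j : Fin n) (f : Vec n → ℂ) : Vec n → ℂ :=
  fun p => deriv (fun t => f (Function.update p.1 j t, p.2.1, p.2.2)) (p.1 j)

/-- Partial derivative in the variable `y_j`. -/
noncomputable def pdy (n : ℕ) (j : Fin n) (f : Vec n → ℂ) : Vec n → ℂ :=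
  fun p => deriv (fun t => f (p.1, Function.update p.2.1 j t, p.2.2)) (p.2.1 j)

/-- Partial derivative in the variable `q_j`. -/
noncomputable def pdq (n : ℕ) (j : Fin n) (f : Vec n → ℂ) : Vec n → ℂ :=
  fun p => deriv (fun t => f (p.1, p.2.1, Function.update p.2.2 j t)) (p.2.2 j)

/-- The symplectic Dirac operator `D_s f = Σ_j (i q_j ∂f/∂y_j − ∂²f/∂q_j∂x_j)`. -/
noncomputable def Ds (n : ℕ) (f : Vec n → ℂ) : Vec n → ℂ :=
  fun p => ∑ j : Fin n, (Complex.I * (p.2.2 j : ℂ) * pdy n j f p - pdq n j (pdx n j f) p)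

/-- The twisted symplectic Dirac operator `D_t f = Σ_j (i q_j ∂f/∂x_j + ∂²f/∂y_j∂q_j)`. -/
noncomputable def Dt (n : ℕ) (f : Vec n → ℂ) : Vec n → ℂ :=
  fun p => ∑ j : Fin n, (Complex.I * (p.2.2 j : ℂ) * pdx n j f p + pdy n j (pdq n j f) p)

/-- The Fischer dual `X_s f = Σ_j (y_j ∂f/∂q_j + i q_j x_j f)`. -/
noncomputable def Xs (n : ℕ) (f : Vec n → ℂ) : Vec n → ℂ :=
  fun p => ∑ j : Fin n, ((p.2.1 j : ℂ) * pdq n j f p + Complex.I * (p.2.2 j : ℂ) * (p.1 j : ℂ) * f p)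

/-- The Fischer dual `X_t f = Σ_j (x_j ∂f/∂q_j − i y_j q_j f)`. -/
noncomputable def Xt (n : ℕ) (f : Vec n → ℂ) : Vec n → ℂ :=
  fun p => ∑ j : Fin n, ((p.1 j : ℂ) * pdq n j f p - Complex.I * (p.2.1 j : ℂ) * (p.2.2 j : ℂ) * f p)

/-- The Euler operator `𝔼 f = Σ_j (x_j ∂f/∂x_j + y_j ∂f/∂y_j)`. -/
noncomputable def EulerOp (n : ℕ) (f : Vec n → ℂ) : Vec n → ℂ :=
  fun p => ∑ j : Fin n, ((p.1 j : ℂ) * pdx n j f p + (p.2.1 j : ℂ) * pdy n j f p)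

/-- The Laplacian in the `(x,y)` variables. -/
noncomputable def Lap (n : ℕ) (f : Vec n → ℂ) : Vec n → ℂ :=
  fun p => ∑ j : Fin n, (pdx n j (pdx n j f) p + pdy n j (pdy n j f) p)
/-- `X_z g = (i/2) Σ_j (x_j − i y_j)(q_j g + ∂g/∂q_j)`. -/
noncomputable def XzOp (n : ℕ) (g : Vec n → ℂ) : Vec n → ℂ :=
  fun p => Complex.I / 2 * ∑ j : Fin n,
    ((p.1 j : ℂ) - Complex.I * (p.2.1 j : ℂ)) * ((p.2.2 j : ℂ) * g p + pdq n j g p)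

/-- `X_z† g = (i/2) Σ_j (x_j + i y_j)(q_j g − ∂g/∂q_j)`. -/
noncomputable def XzdOp (n : ℕ) (g : Vec n → ℂ) : Vec n → ℂ :=
  fun p => Complex.I / 2 * ∑ j : Fin n,
    ((p.1 j : ℂ) + Complex.I * (p.2.1 j : ℂ)) * ((p.2.2 j : ℂ) * g p - pdq n j g p)

/-! Write `X_ε = (i/2) Σ_k (x_k − ε i y_k)(q_k + ε ∂_{q_k})`, so that `X_z = X_1` and
`X_z† = X_{−1}`. Using only the canonical commutation relations between the partial derivatives and
the coordinate multiplications, for `ε² = 1` one has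
`D_t − ε i D_s = i Σ_j (q_j + ε ∂_{q_j})(∂_{x_j} − ε i ∂_{y_j})`, an operator commuting with `X_ε`,
together with `[Δ, X_ε] = D_t − ε i D_s` and `Δ = i [D_s, D_t]`. Hence `Δ` and `D_t − ε i D_s`
annihilate `f`, and `Δ X_ε^{ℓ+1} = X_ε Δ X_ε^ℓ + X_ε^ℓ (D_t − ε i D_s)` gives `Δ X_ε^ℓ f = 0`
by induction. -/

open scoped ContDiff

-- Mathlib makes the commutator bracket of a ring a Lie ring only locally.
attribute [local instance] LieRing.ofAssociativeRing

theorem Ring.lie_mul_eq {A : Type*} [Ring A] (a b c : A) :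
    ⁅a, b * c⁆ = ⁅a, b⁆ * c + b * ⁅a, c⁆ := by
  simp only [Ring.lie_def, mul_sub, sub_mul, mul_assoc]
  abel

theorem Ring.mul_lie_eq {A : Type*} [Ring A] (a b c : A) :
    ⁅a * b, c⁆ = a * ⁅b, c⁆ + ⁅a, c⁆ * b := by
  simp only [Ring.lie_def, mul_sub, sub_mul, mul_assoc]
  abel

theorem smul_pow_smul_eq_zero_of_lie_eq {A M : Type*} [Ring A] [AddCommGroup M] [Module A M]
    {L X a : A} (hLX : ⁅L, X⁆ = a) (hXa : Commute X a) {v : M} (hLv : L • v = 0)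
    (hav : a • v = 0) (ℓ : ℕ) : L • X ^ ℓ • v = 0 := by
  induction ℓ with
  | zero => simpa using hLv
  | succ ℓ ih =>
    have hLX' : L * X = X * L + a := by rw [← hLX, Ring.lie_def]; abel
    have haXv : a • X ^ ℓ • v = 0 := by
      rw [smul_smul, ← (hXa.pow_left ℓ).eq, mul_smul, hav, smul_zero]
    rw [pow_succ', mul_smul, ← mul_smul, hLX', add_smul, mul_smul, ih, smul_zero, haXv, add_zero]

/-- The canonical commutation relations between derivatives `d i` and multiplications `m i`. -/
structure IsCCR {ι A : Type*} [DecidableEq ι] [Ring A] (d m : ι → A) : Prop where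
  commute_d : ∀ i j, Commute (d i) (d j)
  commute_m : ∀ i j, Commute (m i) (m j)
  lie_d_m : ∀ i j, ⁅d i, m j⁆ = if i = j then 1 else 0

namespace IsCCR

variable {ι A : Type*} [DecidableEq ι] [Ring A] {d m : ι → A}

theorem lie_d_d (h : IsCCR d m) (i j : ι) : ⁅d i, d j⁆ = 0 := (h.commute_d i j).lie_eq

theorem lie_m_m (h : IsCCR d m) (i j : ι) : ⁅m i, m j⁆ = 0 := (h.commute_m i j).lie_eq

theorem lie_m_d (h : IsCCR d m) (i j : ι) : ⁅m i, d j⁆ = -if j = i then 1 else 0 := by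
  rw [← lie_skew, h.lie_d_m]

end IsCCR

section SymplecticOperators

variable {n : ℕ}

abbrev ix (j : Fin n) : Fin n ⊕ Fin n ⊕ Fin n := .inl j
abbrev iy (j : Fin n) : Fin n ⊕ Fin n ⊕ Fin n := .inr (.inl j)
abbrev iq (j : Fin n) : Fin n ⊕ Fin n ⊕ Fin n := .inr (.inr j)

variable {A : Type*} [Ring A] [Algebra ℂ A] (d m : Fin n ⊕ Fin n ⊕ Fin n → A) (ε : ℂ)

def ladderQ (k : Fin n) : A := m (iq k) + ε • d (iq k)

/-- For `ε = 1` this is multiplication by `z̄_k = x_k − i y_k`, for `ε = −1` by `z_k`. -/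
def mulZ (k : Fin n) : A := m (ix k) - (ε * I) • m (iy k)

/-- For `ε = 1` this is `2 ∂/∂z_k`, for `ε = −1` it is `2 ∂/∂z̄_k`. -/
def derivZ (k : Fin n) : A := d (ix k) - (ε * I) • d (iy k)

def dolbeaultDual : A := (I / 2) • ∑ k, mulZ m ε k * ladderQ d m ε k

def laplacianXY : A := ∑ j, (d (ix j) * d (ix j) + d (iy j) * d (iy j))

def sympDirac : A := ∑ j, (I • (m (iq j) * d (iy j)) - d (iq j) * d (ix j))

def twistedSympDirac : A := ∑ j, (I • (m (iq j) * d (ix j)) + d (iy j) * d (iq j))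

namespace IsCCR

variable {d m} (h : IsCCR d m)
include h

theorem commute_ladderQ (j k : Fin n) : Commute (ladderQ d m ε j) (ladderQ d m ε k) := by
  rw [commute_iff_lie_eq]
  simp [ladderQ, h.lie_d_d, h.lie_m_m, h.lie_d_m, h.lie_m_d, eq_comm]

theorem commute_ladderQ_mulZ (j k : Fin n) : Commute (ladderQ d m ε j) (mulZ m ε k) := by
  rw [commute_iff_lie_eq]
  simp [ladderQ, mulZ, h.lie_m_m, h.lie_d_m]

theorem commute_derivZ_ladderQ (j k : Fin n) : Commute (derivZ d ε j) (ladderQ d m ε k) := by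
  rw [commute_iff_lie_eq]
  simp [ladderQ, derivZ, h.lie_d_d, h.lie_d_m]

theorem commute_derivZ_mulZ (hε : ε ^ 2 = 1) (j k : Fin n) :
    Commute (derivZ d ε j) (mulZ m ε k) := by
  have hεI : ε * I * (ε * I) = -1 := by linear_combination ε ^ 2 * I_sq - hε
  rw [commute_iff_lie_eq]
  simp [mulZ, derivZ, h.lie_d_m, smul_smul, hεI, ite_add_ite]

theorem commute_dolbeaultDual (hε : ε ^ 2 = 1) :
    Commute (dolbeaultDual d m ε) (∑ j, ladderQ d m ε j * derivZ d ε j) := by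
  refine .smul_left (.sum_left _ _ _ fun k _ => .sum_right _ _ _ fun j _ => ?_) _
  exact .mul_left
    (.mul_right (h.commute_ladderQ_mulZ ε j k).symm (h.commute_derivZ_mulZ ε hε j k).symm)
    (.mul_right (h.commute_ladderQ ε k j) (h.commute_derivZ_ladderQ ε j k).symm)

theorem twistedSympDirac_sub_smul_sympDirac (hε : ε ^ 2 = 1) :
    twistedSympDirac d m - (ε * I) • sympDirac d m =
      I • ∑ j, ladderQ d m ε j * derivZ d ε j := by
  simp only [twistedSympDirac, sympDirac, ladderQ, derivZ, Finset.smul_sum,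
    ← Finset.sum_sub_distrib]
  refine Finset.sum_congr rfl fun j _ => ?_
  simp only [add_mul, mul_sub, smul_mul_assoc, mul_smul_comm, smul_add,
    smul_sub, smul_smul]
  rw [(h.commute_d (iq j) (iy j)).eq]
  linear_combination (norm := module) (ε ^ 2 * I_sq - hε) • (d (iy j) * d (iq j))

theorem lie_laplacianXY_mulZ (k : Fin n) :
    ⁅laplacianXY d, mulZ m ε k⁆ = (2 : ℂ) • derivZ d ε k := by
  simp [laplacianXY, mulZ, derivZ, sum_lie, Ring.mul_lie_eq, h.lie_d_m, Finset.sum_add_distrib,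
    Finset.sum_ite_eq', two_smul, smul_add, add_sub_add_comm]

theorem commute_laplacianXY_ladderQ (k : Fin n) :
    Commute (laplacianXY d) (ladderQ d m ε k) := by
  rw [commute_iff_lie_eq]
  simp [laplacianXY, ladderQ, sum_lie, Ring.mul_lie_eq, h.lie_d_m, h.lie_d_d]

theorem lie_laplacianXY_dolbeaultDual :
    ⁅laplacianXY d, dolbeaultDual d m ε⁆ = I • ∑ j, ladderQ d m ε j * derivZ d ε j := by
  simp only [dolbeaultDual, lie_smul, lie_sum, Ring.lie_mul_eq, h.lie_laplacianXY_mulZ,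
    (h.commute_laplacianXY_ladderQ ε _).lie_eq, mul_zero, add_zero, smul_mul_assoc,
    Finset.smul_sum, smul_smul, (h.commute_derivZ_ladderQ ε _ _).eq]
  norm_num

theorem laplacianXY_eq_smul_lie :
    laplacianXY d = I • ⁅sympDirac d m, twistedSympDirac d m⁆ := by
  simp [laplacianXY, sympDirac, twistedSympDirac, sum_lie, lie_sum, Ring.mul_lie_eq,
    Ring.lie_mul_eq, h.lie_d_m, h.lie_d_d, h.lie_m_m, h.lie_m_d, Finset.smul_sum, smul_smul]

theorem laplacianXY_smul_dolbeaultDual_pow_smul_eq_zero {M : Type*} [AddCommGroup M]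
    [Module A M] (hε : ε ^ 2 = 1) {v : M} (hs : sympDirac d m • v = 0)
    (ht : twistedSympDirac d m • v = 0) (ℓ : ℕ) :
    laplacianXY d • dolbeaultDual d m ε ^ ℓ • v = 0 := by
  refine smul_pow_smul_eq_zero_of_lie_eq (h.lie_laplacianXY_dolbeaultDual ε)
    ((h.commute_dolbeaultDual ε hε).smul_right I) ?_ ?_ ℓ
  · rw [h.laplacianXY_eq_smul_lie, Algebra.smul_def, mul_smul, Ring.lie_def, sub_smul, mul_smul,
      mul_smul, hs, ht, smul_zero, smul_zero, sub_zero, smul_zero]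
  · rw [← h.twistedSympDirac_sub_smul_sympDirac ε hε, sub_smul, Algebra.smul_def, mul_smul, hs,
      ht, smul_zero, sub_zero]

end IsCCR

end SymplecticOperators

section SmoothFunctions

variable (E : Type*) [NormedAddCommGroup E] [NormedSpace ℝ E]

def smoothFun : Submodule ℂ (E → ℂ) where
  carrier := {f | ContDiff ℝ ∞ f}
  add_mem' {f g} (hf : ContDiff ℝ ∞ f) (hg : ContDiff ℝ ∞ g) := hf.add hg
  zero_mem' := (contDiff_const : ContDiff ℝ ∞ fun _ : E => (0 : ℂ))
  smul_mem' c f (hf : ContDiff ℝ ∞ f) := hf.const_smul c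

variable {E}

namespace smoothFun

theorem contDiff (f : smoothFun E) : ContDiff ℝ ∞ (f : E → ℂ) := f.2

theorem differentiable (f : smoothFun E) : Differentiable ℝ (f : E → ℂ) :=
  (contDiff f).differentiable (by simp)

theorem contDiff_fderiv (f : smoothFun E) : ContDiff ℝ ∞ (fderiv ℝ (f : E → ℂ)) :=
  (contDiff f).fderiv_right (by simp)

end smoothFun

open smoothFun

def dirDeriv (v : E) : Module.End ℂ (smoothFun E) where
  toFun f :=
    ⟨fun x => fderiv ℝ (f : E → ℂ) x v, (contDiff_fderiv f).clm_apply contDiff_const⟩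
  map_add' f g := by
    ext x
    simp [fderiv_add (differentiable f x) (differentiable g x)]
  map_smul' c f := by
    ext x
    simp [fderiv_const_smul (differentiable f x) c]

@[simp] theorem coe_dirDeriv (v : E) (f : smoothFun E) :
    (dirDeriv v f : E → ℂ) = fun x => fderiv ℝ (f : E → ℂ) x v := rfl

def mulByLinear (c : E →L[ℝ] ℝ) : Module.End ℂ (smoothFun E) where
  toFun f := ⟨fun x => (c x : ℂ) * (f : E → ℂ) x,
    (ofRealCLM.contDiff.comp c.contDiff).mul (contDiff f)⟩
  map_add' f g := by
    ext x
    simp [mul_add]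
  map_smul' c f := by
    ext x
    simp [mul_left_comm]

@[simp] theorem coe_mulByLinear (c : E →L[ℝ] ℝ) (f : smoothFun E) :
    (mulByLinear c f : E → ℂ) = fun x => c x * (f : E → ℂ) x := rfl

theorem commute_dirDeriv (v w : E) : Commute (dirDeriv v) (dirDeriv w) := by
  refine LinearMap.ext fun f => Subtype.ext <| funext fun x => ?_
  have hsymm : IsSymmSndFDerivAt ℝ (f : E → ℂ) x :=
    (contDiff f).contDiffAt.isSymmSndFDerivAt
      (by rw [minSmoothness_of_isRCLikeNormedField]; exact WithTop.coe_le_coe.2 le_top)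
  have second (u u' : E) : (dirDeriv u (dirDeriv u' f) : E → ℂ) x =
      fderiv ℝ (fderiv ℝ (f : E → ℂ)) x u u' := by
    simp [fderiv_clm_apply ((contDiff_fderiv f).differentiable (by simp) x)
      (differentiableAt_const u')]
  simpa [second] using hsymm v w

theorem commute_mulByLinear (c c' : E →L[ℝ] ℝ) : Commute (mulByLinear c) (mulByLinear c') :=
  LinearMap.ext fun f => Subtype.ext <| funext fun x => by simp [mul_left_comm]

theorem isCCR_dirDeriv_mulByLinear {ι : Type*} [DecidableEq ι] {v : ι → E}
    {c : ι → E →L[ℝ] ℝ} (hvc : ∀ i j, c j (v i) = if i = j then 1 else 0) :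
    IsCCR (fun i => dirDeriv (v i)) (fun i => mulByLinear (c i)) where
  commute_d i j := commute_dirDeriv (v i) (v j)
  commute_m i j := commute_mulByLinear (c i) (c j)
  lie_d_m i j := by
    refine LinearMap.ext fun f => Subtype.ext <| funext fun x => ?_
    have hc : HasFDerivAt (fun y => (c j y : ℂ)) (ofRealCLM.comp (c j)) x :=
      (ofRealCLM.comp (c j)).hasFDerivAt
    have hprod : fderiv ℝ (fun y => (c j y : ℂ) * (f : E → ℂ) y) x =
        (c j x : ℂ) • fderiv ℝ f x + (f : E → ℂ) x • ofRealCLM.comp (c j) :=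
      (hc.mul (differentiable f x).hasFDerivAt).fderiv
    have hv := hvc i j
    split_ifs at hv ⊢ <;> simp [Ring.lie_def, hprod, hv]

end SmoothFunctions

section Coordinates

variable {n : ℕ}

def unitVec : Fin n ⊕ Fin n ⊕ Fin n → Vec n
  | .inl j => (Pi.single j 1, 0, 0)
  | .inr (.inl j) => (0, Pi.single j 1, 0)
  | .inr (.inr j) => (0, 0, Pi.single j 1)

def coordCLM : Fin n ⊕ Fin n ⊕ Fin n → Vec n →L[ℝ] ℝ
  | .inl k => (ContinuousLinearMap.proj k).comp (ContinuousLinearMap.fst ℝ _ _)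
  | .inr (.inl k) => (ContinuousLinearMap.proj k).comp
      ((ContinuousLinearMap.fst ℝ _ _).comp (ContinuousLinearMap.snd ℝ _ _))
  | .inr (.inr k) => (ContinuousLinearMap.proj k).comp
      ((ContinuousLinearMap.snd ℝ _ _).comp (ContinuousLinearMap.snd ℝ _ _))

theorem coordCLM_unitVec (i j : Fin n ⊕ Fin n ⊕ Fin n) :
    coordCLM j (unitVec i) = if i = j then 1 else 0 := by
  rcases i with i | i | i <;> rcases j with j | j | j <;>
    simp [unitVec, coordCLM, Pi.single_apply, eq_comm]

variable (n) in
abbrev coordDeriv (i : Fin n ⊕ Fin n ⊕ Fin n) : Module.End ℂ (smoothFun (Vec n)) :=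
  dirDeriv (unitVec i)

variable (n) in
abbrev coordMul (i : Fin n ⊕ Fin n ⊕ Fin n) : Module.End ℂ (smoothFun (Vec n)) :=
  mulByLinear (coordCLM i)

theorem isCCR_coordDeriv_coordMul : IsCCR (coordDeriv n) (coordMul n) :=
  isCCR_dirDeriv_mulByLinear coordCLM_unitVec

theorem deriv_comp_curve_eq_fderiv {E : Type*} [NormedAddCommGroup E] [NormedSpace ℝ E]
    {f : E → ℂ} {γ : ℝ → E} {t : ℝ} {v : E} (hf : DifferentiableAt ℝ f (γ t))
    (hγ : HasDerivAt γ v t) : deriv (fun s => f (γ s)) t = fderiv ℝ f (γ t) v :=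
  (hf.hasFDerivAt.comp_hasDerivAt t hγ).deriv

theorem pdx_eq_fderiv {f : Vec n → ℂ} {p : Vec n} (hf : DifferentiableAt ℝ f p) (j : Fin n) :
    pdx n j f p = fderiv ℝ f p (unitVec (ix j)) := by
  have hγ : HasDerivAt (fun t => ((Function.update p.1 j t, p.2.1, p.2.2) : Vec n))
      (unitVec (ix j)) (p.1 j) :=
    (hasDerivAt_update p.1 j _).prodMk ((hasDerivAt_const _ _).prodMk (hasDerivAt_const _ _))
  simpa [pdx] using deriv_comp_curve_eq_fderiv (by simpa using hf) hγ

theorem pdy_eq_fderiv {f : Vec n → ℂ} {p : Vec n} (hf : DifferentiableAt ℝ f p) (j : Fin n) :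
    pdy n j f p = fderiv ℝ f p (unitVec (iy j)) := by
  have hγ : HasDerivAt (fun t => ((p.1, Function.update p.2.1 j t, p.2.2) : Vec n))
      (unitVec (iy j)) (p.2.1 j) :=
    (hasDerivAt_const _ _).prodMk ((hasDerivAt_update p.2.1 j _).prodMk (hasDerivAt_const _ _))
  simpa [pdy] using deriv_comp_curve_eq_fderiv (by simpa using hf) hγ

theorem pdq_eq_fderiv {f : Vec n → ℂ} {p : Vec n} (hf : DifferentiableAt ℝ f p) (j : Fin n) :
    pdq n j f p = fderiv ℝ f p (unitVec (iq j)) := by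
  have hγ : HasDerivAt (fun t => ((p.1, p.2.1, Function.update p.2.2 j t) : Vec n))
      (unitVec (iq j)) (p.2.2 j) :=
    (hasDerivAt_const _ _).prodMk ((hasDerivAt_const _ _).prodMk (hasDerivAt_update p.2.2 j _))
  simpa [pdq] using deriv_comp_curve_eq_fderiv (by simpa using hf) hγ

end Coordinates

section Bridge

variable {n : ℕ} (g : smoothFun (Vec n))

theorem pdx_coe (j : Fin n) : pdx n j g = coordDeriv n (ix j) g :=
  funext fun _ => pdx_eq_fderiv (smoothFun.differentiable g _) j

theorem pdy_coe (j : Fin n) : pdy n j g = coordDeriv n (iy j) g :=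
  funext fun _ => pdy_eq_fderiv (smoothFun.differentiable g _) j

theorem pdq_coe (j : Fin n) : pdq n j g = coordDeriv n (iq j) g :=
  funext fun _ => pdq_eq_fderiv (smoothFun.differentiable g _) j

theorem Lap_coe : Lap n g = laplacianXY (coordDeriv n) g := by
  ext p
  simp only [Lap, pdx_coe, pdy_coe]
  simp [laplacianXY]

theorem Ds_coe : Ds n g = sympDirac (coordDeriv n) (coordMul n) g := by
  ext p
  simp only [Ds, pdx_coe, pdy_coe, pdq_coe]
  simp [sympDirac, coordCLM, mul_assoc]

theorem Dt_coe : Dt n g = twistedSympDirac (coordDeriv n) (coordMul n) g := by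
  ext p
  simp only [Dt, pdx_coe, pdy_coe, pdq_coe]
  simp [twistedSympDirac, coordCLM, mul_assoc]

theorem dolbeaultDual_coe_apply (ε : ℂ) (p : Vec n) :
    (dolbeaultDual (coordDeriv n) (coordMul n) ε g : Vec n → ℂ) p =
      I / 2 * ∑ k : Fin n, ((p.1 k : ℂ) - ε * I * (p.2.1 k : ℂ)) *
        ((p.2.2 k : ℂ) * (g : Vec n → ℂ) p + ε * pdq n k g p) := by
  simp [pdq_coe, dolbeaultDual, mulZ, ladderQ, coordCLM, Finset.mul_sum, mul_add, sub_mul,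
    Finset.sum_add_distrib, Finset.sum_sub_distrib, mul_assoc, mul_left_comm]

theorem XzOp_coe : XzOp n g = dolbeaultDual (coordDeriv n) (coordMul n) 1 g := by
  ext p
  simp [XzOp, dolbeaultDual_coe_apply]

theorem XzdOp_coe : XzdOp n g = dolbeaultDual (coordDeriv n) (coordMul n) (-1) g := by
  ext p
  simp [XzdOp, dolbeaultDual_coe_apply, sub_eq_add_neg]

end Bridge

theorem iterates_of_Xz_and_Xzdagger_on_h_monogenics_are_harmonic_general
    (n : ℕ) (f : Vec n → ℂ) (hf : ContDiff ℝ (⊤ : ℕ∞) f)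
    (hDs : Ds n f = fun _ => 0) (hDt : Dt n f = fun _ => 0) :
    ∀ ℓ : ℕ, Lap n ((XzOp n)^[ℓ] f) = (fun _ => 0) ∧
      Lap n ((XzdOp n)^[ℓ] f) = (fun _ => 0) := by
  let F : smoothFun (Vec n) := ⟨f, hf⟩
  have hs : sympDirac (coordDeriv n) (coordMul n) • F = 0 :=
    Subtype.ext ((Ds_coe F).symm.trans hDs)
  have ht : twistedSympDirac (coordDeriv n) (coordMul n) • F = 0 :=
    Subtype.ext ((Dt_coe F).symm.trans hDt)
  have harmonic (ε : ℂ) (hε : ε ^ 2 = 1) (T : (Vec n → ℂ) → Vec n → ℂ)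
      (hT : ∀ g : smoothFun (Vec n), T g = dolbeaultDual (coordDeriv n) (coordMul n) ε g)
      (ℓ : ℕ) : Lap n (T^[ℓ] f) = fun _ => 0 := by
    set X := dolbeaultDual (coordDeriv n) (coordMul n) ε
    have hiter : T^[ℓ] f = ↑(X ^ ℓ • F) := by
      rw [Module.End.smul_def, Module.End.coe_pow]
      exact (Function.Semiconj.iterate_right (fun g => (hT g).symm) ℓ F).symm
    rw [hiter, Lap_coe, ← Module.End.smul_def,
      isCCR_coordDeriv_coordMul.laplacianXY_smul_dolbeaultDual_pow_smul_eq_zero ε hε hs ht ℓ]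
    rfl
  exact fun ℓ =>
    ⟨harmonic 1 (one_pow 2) _ XzOp_coe ℓ, harmonic (-1) (by norm_num) _ XzdOp_coe ℓ⟩

theorem iterates_of_Xz_and_Xzdagger_on_h_monogenics_are_harmonic
    (n : ℕ) (hn : 1 ≤ n) (f : Vec n → ℂ) (hf : ContDiff ℝ (⊤ : ℕ∞) f)
    (hDs : Ds n f = fun _ => 0) (hDt : Dt n f = fun _ => 0) :
    ∀ ℓ : ℕ, Lap n ((XzOp n)^[ℓ] f) = (fun _ => 0) ∧
      Lap n ((XzdOp n)^[ℓ] f) = (fun _ => 0) :=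
  iterates_of_Xz_and_Xzdagger_on_h_monogenics_are_harmonic_general n f hf hDs hDt
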